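/- arXiv:2301.10304 — 2 statements merged into one kernel-verified Lean document; each statement's English description precedes it below -/
import Mathlib

section
/- Let Z be a topological space and f : Z → ℝⁿ an almost proper continuous map, where Z is not compact. Then for every proper continuous path γ : [0,1) → Z, the path f ∘ γ : [0,1) → ℝⁿ has infinite Euclidean length. (In particular, almost proper immersions of manifolds into ℝⁿ are complete.) -/
/-- If `Z` is a noncompact topological space and `f : Z → ℝⁿ` is an almost proper
continuous map, then for every proper continuous path `γ : [0,1) → Z` the path
`f ∘ γ` has infinite Euclidean length. -/
theorem almost_proper_is_complete {Z : Type*} [TopologicalSpace Z] (n : ℕ)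
    (hZ : ¬ IsCompact (Set.univ : Set Z))
    (f : Z → EuclideanSpace ℝ (Fin n)) (hf : Continuous f)
    (hap : ∀ K : Set (EuclideanSpace ℝ (Fin n)), IsCompact K → ∀ x ∈ f ⁻¹' K,
      IsCompact (connectedComponentIn (f ⁻¹' K) x)) :
    ∀ γ : Set.Ico (0 : ℝ) 1 → Z, Continuous γ →
      (∀ C : Set Z, IsCompact C → IsCompact (γ ⁻¹' C)) →
      eVariationOn (f ∘ γ) Set.univ = ⊤ := by
  intro γ hγ hprop
  by_contra hne
  set V := eVariationOn (f ∘ γ) Set.univ with hVdef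
  have hV : V ≠ ⊤ := hne
  set x0 : Set.Ico (0 : ℝ) 1 := ⟨0, by constructor <;> norm_num⟩ with hx0
  set K := Metric.closedBall (f (γ x0)) V.toReal with hKdef
  have hK : IsCompact K := isCompact_closedBall _ _
  have hmem : ∀ t, γ t ∈ f ⁻¹' K := by
    intro t
    have h := eVariationOn.edist_le (f := f ∘ γ) (s := (Set.univ : Set (Set.Ico (0:ℝ) 1)))
      (Set.mem_univ t) (Set.mem_univ x0)
    have : dist (f (γ t)) (f (γ x0)) ≤ V.toReal := by
      rw [dist_edist]
      exact ENNReal.toReal_mono hV h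
    simpa [K, Metric.mem_closedBall] using this
  have hconn : IsPreconnected (Set.range γ) := by
    haveI : PreconnectedSpace (Set.Ico (0:ℝ) 1) :=
      Subtype.preconnectedSpace isPreconnected_Ico
    exact isPreconnected_range hγ
  have hsub : Set.range γ ⊆ connectedComponentIn (f ⁻¹' K) (γ x0) :=
    hconn.subset_connectedComponentIn ⟨x0, rfl⟩ (Set.range_subset_iff.mpr hmem)
  have hC : IsCompact (connectedComponentIn (f ⁻¹' K) (γ x0)) :=
    hap K hK _ (hmem x0)
  have huniv : γ ⁻¹' (connectedComponentIn (f ⁻¹' K) (γ x0)) = Set.univ := by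
    ext t; simp only [Set.mem_preimage, Set.mem_univ, iff_true]
    exact hsub ⟨t, rfl⟩
  have hcompact : IsCompact (Set.univ : Set (Set.Ico (0:ℝ) 1)) := by
    rw [← huniv]; exact hprop _ hC
  have hIco : IsCompact (Set.Ico (0:ℝ) 1) := isCompact_iff_isCompact_univ.mpr hcompact
  have hclosed : IsClosed (Set.Ico (0:ℝ) 1) := hIco.isClosed
  have : Set.Ico (0:ℝ) 1 = Set.Icc 0 1 := by
    rw [← hclosed.closure_eq, closure_Ico (by norm_num : (0:ℝ) ≠ 1)]
  have h1 : (1:ℝ) ∈ Set.Ico (0:ℝ) 1 := this ▸ (by norm_num : (1:ℝ) ∈ Set.Icc (0:ℝ) 1)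
  exact absurd h1.2 (lt_irrefl 1)
end

section
/- Let U ⊂ ℂ be open, let K ⊂ U be compact, let K' be a compact subset of the interior of K, and let f : U → ℂ² be a holomorphic map that is injective on K and is an immersion (f'(z) ≠ 0) at every point of K. Then there exists ε > 0 such that every holomorphic map g : U → ℂ² with sup_{z ∈ K} |g(z) − f(z)| < ε is injective on K'. -/
/-!
Injectivity on `K'` is a property of pairs `(p, q) ∈ K' × K'`, so by compactness it suffices to
control the perturbations near each pair `(a, b)`. Off the diagonal `f a ≠ f b`, and locally
uniform convergence keeps `g p` and `g q` apart. On the diagonal, Cauchy estimates make `g'`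
uniformly close to `f' a ≠ 0` on a small ball, and the mean value inequality for
`z ↦ g z - z • f' a` makes `g` injective there. Applying this along a sequence of
counterexamples `g` with `‖g - f‖ < 1 / (n + 1)` on `K` gives the required `ε`.
-/

open Filter Metric Set Topology

theorem Convex.injOn_of_norm_deriv_sub_le {𝕜 E : Type*} [RCLike 𝕜] [NormedAddCommGroup E]
    [NormedSpace 𝕜 E] {g : 𝕜 → E} {s : Set 𝕜} {v : E} {C : ℝ} (hs : Convex ℝ s)
    (hg : ∀ z ∈ s, DifferentiableAt 𝕜 g z) (hC : C < ‖v‖)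
    (bound : ∀ z ∈ s, ‖deriv g z - v‖ ≤ C) : InjOn g s := by
  intro x hx y hy hxy
  have hderiv : ∀ z ∈ s, HasDerivWithinAt (fun w ↦ g w - w • v) (deriv g z - v) s z := fun z hz ↦
    ((hg z hz).hasDerivAt.sub (by simpa using (hasDerivAt_id z).smul_const v)).hasDerivWithinAt
  have hmv := hs.norm_image_sub_le_of_norm_hasDerivWithin_le hderiv bound hx hy
  rw [hxy, sub_sub_sub_cancel_left, ← sub_smul, norm_smul, norm_sub_rev] at hmv
  by_contra hne
  have : 0 < ‖y - x‖ := norm_pos_iff.2 (sub_ne_zero.2 (Ne.symm hne))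
  nlinarith

theorem TendstoLocallyUniformlyOn.tendsto_prod_nhds {ι α β : Type*} [TopologicalSpace α]
    [UniformSpace β] {F : ι → α → β} {f : α → β} {l : Filter ι} {U : Set α} {a : α}
    (hF : TendstoLocallyUniformlyOn F f l U) (hU : IsOpen U) (ha : a ∈ U)
    (hf : ContinuousAt f a) :
    Tendsto (fun z : ι × α ↦ F z.1 z.2) (l ×ˢ 𝓝 a) (𝓝 (f a)) :=
  tendsto_comp_of_locally_uniform_limit (F := fun z : ι × α ↦ F z.1) hf tendsto_snd
    fun u hu ↦ by
      obtain ⟨t, ht, hFt⟩ := hF u hu a ha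
      exact ⟨t, hU.nhdsWithin_eq ha ▸ ht, hFt.prod_inl _⟩

theorem TendstoLocallyUniformlyOn.eventually_ne_of_ne {ι α β : Type*} [TopologicalSpace α]
    [UniformSpace β] [T2Space β] {F : ι → α → β} {f : α → β} {l : Filter ι} {U : Set α}
    {a b : α} (hF : TendstoLocallyUniformlyOn F f l U) (hU : IsOpen U) (ha : a ∈ U) (hb : b ∈ U)
    (hfa : ContinuousAt f a) (hfb : ContinuousAt f b) (hab : f a ≠ f b) :
    ∀ᶠ z in l ×ˢ 𝓝 (a, b), F z.1 z.2.1 ≠ F z.1 z.2.2 := by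
  have hlim : Tendsto (fun z : ι × α × α ↦ (F z.1 z.2.1, F z.1 z.2.2)) (l ×ˢ 𝓝 (a, b))
      (𝓝 (f a, f b)) :=
    ((hF.tendsto_prod_nhds hU ha hfa).comp
      (tendsto_id.prodMap (continuous_fst.tendsto (a, b)))).prodMk_nhds
      ((hF.tendsto_prod_nhds hU hb hfb).comp (tendsto_id.prodMap (continuous_snd.tendsto (a, b))))
  exact hlim.eventually (isOpen_ne_fun continuous_fst continuous_snd |>.mem_nhds hab)

section Holomorphic

variable {ι E : Type*} [NormedAddCommGroup E] [NormedSpace ℂ E] [CompleteSpace E]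
  {F : ι → ℂ → E} {f : ℂ → E} {l : Filter ι} {U : Set ℂ}

theorem exists_mem_nhds_eventually_injOn_of_tendstoLocallyUniformlyOn {a : ℂ}
    (hF : TendstoLocallyUniformlyOn F f l U) (hU : IsOpen U)
    (hFd : ∀ᶠ n in l, DifferentiableOn ℂ (F n) U) (hf : DifferentiableOn ℂ f U) (ha : a ∈ U)
    (hfa : deriv f a ≠ 0) : ∃ s ∈ 𝓝 a, ∀ᶠ n in l, InjOn (F n) s := by
  set v := deriv f a
  have hv : 0 < ‖v‖ := norm_pos_iff.2 hfa
  have hcont : ContinuousAt (deriv f) a :=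
    (hf.deriv hU).continuousOn.continuousAt (hU.mem_nhds ha)
  obtain ⟨r, hr, hrU, hrv⟩ : ∃ r > 0, closedBall a r ⊆ U ∧
      ∀ z ∈ closedBall a r, dist (deriv f z) v < ‖v‖ / 4 := by
    have hnear := (hU.eventually_mem ha).and
      (hcont.eventually (ball_mem_nhds v (by positivity : 0 < ‖v‖ / 4)))
    obtain ⟨r, hr, hball⟩ := nhds_basis_closedBall.eventually_iff.1 hnear
    exact ⟨r, hr, fun z hz ↦ (hball hz).1, fun z hz ↦ (hball hz).2⟩
  have hunif : TendstoUniformlyOn (fun n ↦ deriv (F n)) (deriv f) l (closedBall a r) :=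
    (tendstoLocallyUniformlyOn_iff_forall_isCompact hU).1 (hF.deriv hFd hU) _ hrU
      (isCompact_closedBall a r)
  refine ⟨closedBall a r, closedBall_mem_nhds a hr, ?_⟩
  filter_upwards [Metric.tendstoUniformlyOn_iff.1 hunif _ (by positivity : 0 < ‖v‖ / 4), hFd]
    with n hn hFn
  refine (convex_closedBall a r).injOn_of_norm_deriv_sub_le
    (fun z hz ↦ hFn.differentiableAt (hU.mem_nhds (hrU hz))) (half_lt_self hv) fun z hz ↦ ?_
  calc ‖deriv (F n) z - v‖ = dist (deriv (F n) z) v := (dist_eq_norm _ _).symm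
    _ ≤ dist (deriv f z) (deriv (F n) z) + dist (deriv f z) v := dist_triangle_left _ _ _
    _ ≤ ‖v‖ / 2 := by linarith [hn z hz, hrv z hz]

theorem eventually_injOn_of_tendstoLocallyUniformlyOn {K : Set ℂ}
    (hF : TendstoLocallyUniformlyOn F f l U) (hU : IsOpen U)
    (hFd : ∀ᶠ n in l, DifferentiableOn ℂ (F n) U) (hf : DifferentiableOn ℂ f U)
    (hK : IsCompact K) (hKU : K ⊆ U) (hinj : InjOn f K) (himm : ∀ z ∈ K, deriv f z ≠ 0) :
    ∀ᶠ n in l, InjOn (F n) K := by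
  have hcont : ∀ z ∈ K, ContinuousAt f z := fun z hz ↦
    hf.continuousOn.continuousAt (hU.mem_nhds (hKU hz))
  have hlocal : ∀ x ∈ K ×ˢ K,
      ∀ᶠ z in l ×ˢ 𝓝 x, F z.1 z.2.1 = F z.1 z.2.2 → z.2.1 = z.2.2 := by
    rintro ⟨a, b⟩ ⟨ha, hb⟩
    obtain rfl | hab := eq_or_ne a b
    · obtain ⟨s, hs, hFs⟩ :=
        exists_mem_nhds_eventually_injOn_of_tendstoLocallyUniformlyOn hF hU hFd hf (hKU ha)
          (himm a ha)
      filter_upwards [hFs.prod_inl _, Eventually.prod_inr (prod_mem_nhds hs hs) l]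
        with z hz hzs
      exact hz hzs.1 hzs.2
    · filter_upwards [hF.eventually_ne_of_ne hU (hKU ha) (hKU hb) (hcont a ha) (hcont b hb)
        (hinj.ne ha hb hab)] with z hne heq using absurd heq hne
  have hglobal : ∀ᶠ z in l ×ˢ 𝓝ˢ (K ×ˢ K), F z.1 z.2.1 = F z.1 z.2.2 → z.2.1 = z.2.2 :=
    (hK.prod hK).mem_prod_nhdsSet_of_forall hlocal
  filter_upwards [hglobal.curry] with n hn
  exact fun p hp q hq ↦ hn.self_of_nhdsSet (p, q) ⟨hp, hq⟩

end Holomorphic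

theorem injectivity_stable_under_perturbation_general (U : Set ℂ)
    (K K' : Set ℂ) (hKU : K ⊆ U)
    (hK' : IsCompact K') (hK'K : K' ⊆ interior K)
    (f : ℂ → ℂ × ℂ) (hf : DifferentiableOn ℂ f U)
    (hinj : Set.InjOn f K) (himm : ∀ z ∈ K, deriv f z ≠ 0) :
    ∃ ε > 0, ∀ g : ℂ → ℂ × ℂ, DifferentiableOn ℂ g U →
      (∀ z ∈ K, ‖g z - f z‖ < ε) → Set.InjOn g K' := by
  have hint : interior K ⊆ U := interior_subset.trans hKU
  have hK'K₀ : K' ⊆ K := hK'K.trans interior_subset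
  by_contra! hbad
  choose g hgd hgf hg using fun n : ℕ ↦ hbad (1 / (n + 1)) Nat.one_div_pos_of_nat
  have hconv : TendstoUniformlyOn g f atTop K := by
    refine Metric.tendstoUniformlyOn_iff.2 fun ε hε ↦ ?_
    filter_upwards [tendsto_one_div_add_atTop_nhds_zero_nat.eventually (gt_mem_nhds hε)]
      with n hn z hz
    rw [dist_comm, dist_eq_norm]
    exact (hgf n z hz).trans hn
  obtain ⟨n, hn⟩ := (eventually_injOn_of_tendstoLocallyUniformlyOn
    (hconv.mono interior_subset).tendstoLocallyUniformlyOn isOpen_interior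
    (.of_forall fun n ↦ (hgd n).mono hint) (hf.mono hint) hK' hK'K (hinj.mono hK'K₀)
    fun z hz ↦ himm z (hK'K₀ hz)).exists
  exact hg n hn

/-- Stability of injectivity: if `f` is holomorphic on `U ⊆ ℂ`, injective on a compact
`K ⊆ U`, and an immersion on `K`, then every holomorphic map `g` sufficiently uniformly
close to `f` on `K` is injective on a given compact `K' ⊆ int K`. -/
theorem injectivity_stable_under_perturbation (U : Set ℂ) (hU : IsOpen U)
    (K K' : Set ℂ) (hK : IsCompact K) (hKU : K ⊆ U)
    (hK' : IsCompact K') (hK'K : K' ⊆ interior K)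
    (f : ℂ → ℂ × ℂ) (hf : DifferentiableOn ℂ f U)
    (hinj : Set.InjOn f K) (himm : ∀ z ∈ K, deriv f z ≠ 0) :
    ∃ ε > 0, ∀ g : ℂ → ℂ × ℂ, DifferentiableOn ℂ g U →
      (∀ z ∈ K, ‖g z - f z‖ < ε) → Set.InjOn g K' :=
  injectivity_stable_under_perturbation_general U K K' hKU hK' hK'K f hf hinj himm
end
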